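/- Let $p > 1$, $z_0 \in \mathbb{C}$, $0 < r_1 < r_2$, and let $Q : \mathbb{C} \to (0,\infty)$ be measurable. Set $I = \int_{r_1}^{r_2} \frac{dr}{\|Q\|_{1/(p-1)}(z_0,r)}$ and assume $0 < I < \infty$. Then for every measurable function $\eta : (r_1,r_2) \to [0,\infty]$ with $\int_{r_1}^{r_2} \eta(r)\, dr = 1$ one has $$\int_{R(z_0,r_1,r_2)} Q(z)^{1/(p-1)}\, \eta(|z-z_0|)^{p/(p-1)}\, dm(z) \;\ge\; I^{-1/(p-1)}.$$ -/

import Mathlib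

open MeasureTheory ENNReal Real

/-!
In polar coordinates the annulus integral becomes `∫_{r₁}^{r₂} η(r)^q c(r) dr`, where
`q = p/(p-1)` and `c(r)` is the circle integral of `Q^{1/(p-1)}`, while `I = ∫_{r₁}^{r₂} c^{1-p}`.
Hölder's inequality with exponents `q` and `p`, applied to `η = (η c^{1/q}) · c^{-1/q}`, gives
`1 = ∫ η ≤ (∫ η^q c)^{1/q} I^{1/p}`, which rearranges to the claim. The degenerate
values are harmless: if `I` or `∫ η^q c` is infinite there is nothing to prove, and otherwise
`c > 0` a.e. and `η = 0` a.e. where `c = ∞`.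
-/

/-- The arclength integral `∫_{C(z₀,r)} Q^e |dz| = ∫_0^{2π} Q(z₀ + r e^{iθ})^e · r dθ`
of the `e`-th power of a positive function `Q` over the circle of radius `r`
centered at `z₀`, with values in `[0,∞]`. -/
noncomputable def circlePowInt (Q : ℂ → ℝ) (e : ℝ) (z0 : ℂ) (r : ℝ) : ℝ≥0∞ :=
  ∫⁻ θ in Set.Ioc (0 : ℝ) (2 * π),
    ENNReal.ofReal (Q (z0 + (r : ℂ) * Complex.exp ((θ : ℂ) * Complex.I))) ^ e
      * ENNReal.ofReal r

/-- `‖Q‖_{1/(p-1)}(z₀,r) = (∫_{C(z₀,r)} Q^{1/(p-1)} |dz|)^{p-1}`. -/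
noncomputable def normQ (Q : ℂ → ℝ) (p : ℝ) (z0 : ℂ) (r : ℝ) : ℝ≥0∞ :=
  circlePowInt Q (1 / (p - 1)) z0 r ^ (p - 1)

/-- The annulus `R(z₀,r₁,r₂) = {z ∈ ℂ : r₁ < |z - z₀| < r₂}`. -/
def annulus (z0 : ℂ) (r1 r2 : ℝ) : Set ℂ :=
  {z : ℂ | r1 < ‖z - z0‖ ∧ ‖z - z0‖ < r2}

theorem ENNReal.le_mul_rpow_mul_rpow_neg {x y : ℝ≥0∞} (hy : y ≠ 0) (hx : y = ⊤ → x = 0)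
    (a : ℝ) : x ≤ x * y ^ a * y ^ (-a) := by
  rcases eq_or_ne y ⊤ with hy_top | hy_top
  · simp [hx hy_top]
  · rw [mul_assoc, ← ENNReal.rpow_add _ _ hy hy_top, add_neg_cancel, ENNReal.rpow_zero, mul_one]

theorem ENNReal.rpow_neg_le_of_one_le_rpow_mul_rpow {a b : ℝ≥0∞} {p : ℝ} (hp : 1 < p)
    (ha : a ≠ ⊤) (h : 1 ≤ b ^ (1 / (p / (p - 1))) * a ^ (1 / p)) :
    a ^ (-1 / (p - 1)) ≤ b := by
  rcases eq_or_ne b ⊤ with hb | hb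
  · rw [hb]; exact le_top
  have hp1 : 0 < p - 1 := by linarith
  have hq0 : 0 < p / (p - 1) := by positivity
  have h' := ENNReal.rpow_le_rpow h hq0.le
  rw [ENNReal.one_rpow, ENNReal.mul_rpow_of_nonneg _ _ hq0.le, ← ENNReal.rpow_mul,
    ← ENNReal.rpow_mul, one_div_mul_cancel hq0.ne', ENNReal.rpow_one, mul_comm,
    show 1 / p * (p / (p - 1)) = 1 / (p - 1) by field_simp] at h'
  rw [neg_div, ENNReal.rpow_neg, ENNReal.inv_le_iff_le_mul (fun h => absurd h hb)
    (fun h => absurd h (ENNReal.rpow_ne_top_of_nonneg (by positivity) ha))]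
  exact h'

theorem rpow_neg_lintegral_inv_rpow_le_lintegral {α : Type*} [MeasurableSpace α]
    (μ : Measure α) {p : ℝ} (hp : 1 < p) {η c : α → ℝ≥0∞}
    (hη : AEMeasurable η μ) (hc : AEMeasurable c μ) (hη1 : ∫⁻ x, η x ∂μ = 1) :
    (∫⁻ x, (c x ^ (p - 1))⁻¹ ∂μ) ^ (-1 / (p - 1))
      ≤ ∫⁻ x, η x ^ (p / (p - 1)) * c x ∂μ := by
  have hp1 : 0 < p - 1 := by linarith
  set q := p / (p - 1) with hq
  have hpq : q.HolderConjugate p := (Real.HolderConjugate.conjExponent hp).symm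
  have hq0 : 0 < q := hpq.pos
  set I := ∫⁻ x, (c x ^ (p - 1))⁻¹ ∂μ
  set J := ∫⁻ x, η x ^ q * c x ∂μ
  rcases eq_or_ne I ⊤ with hI | hI
  · rw [hI, ENNReal.top_rpow_of_neg (div_neg_of_neg_of_pos (by norm_num) hp1)]
    exact zero_le
  rcases eq_or_ne J ⊤ with hJ | hJ
  · rw [hJ]; exact le_top
  have hc0 : ∀ᵐ x ∂μ, c x ≠ 0 := by
    filter_upwards [ae_lt_top' ((hc.pow_const _).inv) hI] with x hx hx0
    simp [hx0, ENNReal.zero_rpow_of_pos hp1] at hx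
  have hη0 : ∀ᵐ x ∂μ, c x = ⊤ → η x = 0 := by
    filter_upwards [ae_lt_top' ((hη.pow_const q).mul hc) hJ] with x hx hx_top
    by_contra hx0
    rw [Pi.mul_apply, hx_top, ENNReal.mul_top (mt (ENNReal.rpow_eq_zero_iff_of_pos hq0).1 hx0)]
      at hx
    exact lt_irrefl _ hx
  have hfq : ∀ x, (η x * c x ^ q⁻¹) ^ q = η x ^ q * c x := fun x => by
    rw [ENNReal.mul_rpow_of_nonneg _ _ hq0.le, ← ENNReal.rpow_mul, inv_mul_cancel₀ hq0.ne',
      ENNReal.rpow_one]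
  have hgp : ∀ x, (c x ^ (-q⁻¹)) ^ p = (c x ^ (p - 1))⁻¹ := fun x => by
    rw [← ENNReal.rpow_mul, ← ENNReal.rpow_neg, hq]
    congr 1
    field_simp
  have hpt : η ≤ᵐ[μ] fun x => η x * c x ^ q⁻¹ * c x ^ (-q⁻¹) := by
    filter_upwards [hc0, hη0] with x hx0 hx_top using
      ENNReal.le_mul_rpow_mul_rpow_neg hx0 hx_top _
  have hHolder : 1 ≤ J ^ (1 / q) * I ^ (1 / p) := by
    calc 1 = ∫⁻ x, η x ∂μ := hη1.symm
      _ ≤ ∫⁻ x, η x * c x ^ q⁻¹ * c x ^ (-q⁻¹) ∂μ := lintegral_mono_ae hpt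
      _ ≤ (∫⁻ x, (η x * c x ^ q⁻¹) ^ q ∂μ) ^ (1 / q)
            * (∫⁻ x, (c x ^ (-q⁻¹)) ^ p ∂μ) ^ (1 / p) :=
        ENNReal.lintegral_mul_le_Lp_mul_Lq μ hpq (hη.mul (hc.pow_const _)) (hc.pow_const _)
      _ = J ^ (1 / q) * I ^ (1 / p) := by simp only [hfq, hgp, J, I]
  exact ENNReal.rpow_neg_le_of_one_le_rpow_mul_rpow hp hI hHolder

theorem Function.Periodic.setLIntegral_Ioc_add_eq {F : ℝ → ℝ≥0∞} {T : ℝ}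
    (hF : Function.Periodic F T) (hT : 0 < T) (a b : ℝ) :
    ∫⁻ x in Set.Ioc a (a + T), F x = ∫⁻ x in Set.Ioc b (b + T), F x := by
  have : Fact (0 < T) := ⟨hT⟩
  have h (c : ℝ) : ∫⁻ x in Set.Ioc c (c + T), F x = ∫⁻ y : AddCircle T, hF.lift y := by
    rw [← AddCircle.lintegral_preimage T c hF.lift]
    exact setLIntegral_congr_fun measurableSet_Ioc fun x _ => (hF.lift_coe x).symm
  rw [h a, h b]

theorem measurableSet_annulus (z0 : ℂ) (r1 r2 : ℝ) : MeasurableSet (annulus z0 r1 r2) :=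
  (isOpen_lt continuous_const (continuous_id.sub continuous_const).norm).inter
    (isOpen_lt (continuous_id.sub continuous_const).norm continuous_const) |>.measurableSet

theorem add_mem_annulus_iff (z0 w : ℂ) (r1 r2 : ℝ) :
    z0 + w ∈ annulus z0 r1 r2 ↔ r1 < ‖w‖ ∧ ‖w‖ < r2 := by
  simp [annulus]

theorem norm_ofReal_mul_exp_ofReal_mul_I {r : ℝ} (hr : 0 ≤ r) (θ : ℝ) :
    ‖(r : ℂ) * Complex.exp (θ * Complex.I)‖ = r := by
  rw [norm_mul, Complex.norm_exp_ofReal_mul_I, mul_one, Complex.norm_real,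
    Real.norm_of_nonneg hr]

theorem lintegral_annulus_eq {r1 : ℝ} (hr1 : 0 ≤ r1) (r2 : ℝ) (z0 : ℂ) {F : ℂ → ℝ≥0∞}
    (hF : Measurable F) :
    ∫⁻ z in annulus z0 r1 r2, F z = ∫⁻ r in Set.Ioo r1 r2, ∫⁻ θ in Set.Ioc 0 (2 * π),
      F (z0 + r * Complex.exp (θ * Complex.I)) * ENNReal.ofReal r := by
  set H : ℝ × ℝ → ℝ≥0∞ := fun x =>
    F (z0 + x.1 * Complex.exp (x.2 * Complex.I)) * ENNReal.ofReal x.1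
  set s := Set.Ioo r1 r2 ×ˢ Set.Ioo (-π) π
  have hs : s ⊆ Complex.polarCoord.target := Set.prod_mono (fun r hr => hr1.trans_lt hr.1) le_rfl
  have hpolar : ∀ x ∈ Complex.polarCoord.target, ENNReal.ofReal x.1 •
      (annulus z0 r1 r2).indicator F (z0 + Complex.polarCoord.symm x) = s.indicator H x := by
    rintro ⟨r, θ⟩ ⟨hr, hθ⟩
    have hsymm : Complex.polarCoord.symm (r, θ) = r * Complex.exp (θ * Complex.I) := by
      simp [Complex.exp_mul_I, ← Complex.ofReal_cos, ← Complex.ofReal_sin]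
    simp only [Set.indicator, add_mem_annulus_iff, hsymm,
      norm_ofReal_mul_exp_ofReal_mul_I (le_of_lt hr), s, H, Set.mem_prod, hθ,
      and_true, Set.mem_Ioo, smul_eq_mul, mul_comm (ENNReal.ofReal r)]
    split_ifs
    exacts [rfl, zero_mul _]
  have hH : Measurable H := by fun_prop
  calc ∫⁻ z in annulus z0 r1 r2, F z
      = ∫⁻ w, (annulus z0 r1 r2).indicator F (z0 + w) := by
        rw [lintegral_add_left_eq_self, lintegral_indicator (measurableSet_annulus _ _ _)]
    _ = ∫⁻ x in Complex.polarCoord.target, s.indicator H x := by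
        rw [← Complex.lintegral_comp_polarCoord_symm]
        exact setLIntegral_congr_fun Complex.polarCoord.open_target.measurableSet hpolar
    _ = ∫⁻ x in s, H x := by
        rw [lintegral_indicator (measurableSet_Ioo.prod measurableSet_Ioo),
          Measure.restrict_restrict (measurableSet_Ioo.prod measurableSet_Ioo),
          Set.inter_eq_left.2 hs]
    _ = ∫⁻ r in Set.Ioo r1 r2, ∫⁻ θ in Set.Ioo (-π) π, H (r, θ) := by
        rw [Measure.volume_eq_prod, ← Measure.prod_restrict, lintegral_prod _ hH.aemeasurable]
    _ = _ := by
        refine setLIntegral_congr_fun measurableSet_Ioo fun r _ => ?_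
        have hper : Function.Periodic (fun θ => H (r, θ)) (2 * π) := fun θ => by
          simp [H, add_mul, Complex.exp_add]
        calc ∫⁻ θ in Set.Ioo (-π) π, H (r, θ)
            = ∫⁻ θ in Set.Ioc (-π) (-π + 2 * π), H (r, θ) := by
              rw [neg_add_eq_sub, two_mul, add_sub_cancel_right]
              exact setLIntegral_congr Ioo_ae_eq_Ioc
          _ = ∫⁻ θ in Set.Ioc 0 (0 + 2 * π), H (r, θ) :=
              hper.setLIntegral_Ioc_add_eq two_pi_pos _ _
          _ = _ := by rw [zero_add]

theorem measurable_circlePowInt {Q : ℂ → ℝ} (hQ : Measurable Q) (e : ℝ) (z0 : ℂ) :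
    Measurable (circlePowInt Q e z0) := by
  have : Measurable fun x : ℝ × ℝ =>
      ENNReal.ofReal (Q (z0 + x.1 * Complex.exp (x.2 * Complex.I))) ^ e
        * ENNReal.ofReal x.1 := by
    fun_prop
  exact this.lintegral_prod_right'

theorem lintegral_annulus_rpow_mul_rpow_eq {r1 : ℝ} (hr1 : 0 ≤ r1) (r2 : ℝ) (z0 : ℂ)
    {Q : ℂ → ℝ} (hQ : Measurable Q) {η : ℝ → ℝ≥0∞} (hη : Measurable η) (e q : ℝ) :
    ∫⁻ z in annulus z0 r1 r2, ENNReal.ofReal (Q z) ^ e * η ‖z - z0‖ ^ q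
      = ∫⁻ r in Set.Ioo r1 r2, η r ^ q * circlePowInt Q e z0 r := by
  rw [lintegral_annulus_eq hr1 r2 z0 (by fun_prop)]
  refine setLIntegral_congr_fun measurableSet_Ioo fun r hr => ?_
  simp only [add_sub_cancel_left, norm_ofReal_mul_exp_ofReal_mul_I (hr1.trans hr.1.le)]
  rw [circlePowInt, ← lintegral_const_mul _ (by fun_prop)]
  congr with θ
  ring

theorem stmt7_general (p : ℝ) (hp : 1 < p) (z0 : ℂ) (r1 r2 : ℝ) (hr1 : 0 < r1)
    (Q : ℂ → ℝ) (hQm : Measurable Q)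
    (I : ℝ≥0∞) (hI : I = ∫⁻ r in Set.Ioo r1 r2, (normQ Q p z0 r)⁻¹ ∂volume)
    (η : ℝ → ℝ≥0∞) (hηm : Measurable η)
    (hη1 : ∫⁻ r in Set.Ioo r1 r2, η r ∂volume = 1) :
    I ^ (-1 / (p - 1)) ≤
      ∫⁻ z in annulus z0 r1 r2,
        ENNReal.ofReal (Q z) ^ (1 / (p - 1))
          * η (‖z - z0‖) ^ (p / (p - 1)) ∂volume := by
  rw [hI, lintegral_annulus_rpow_mul_rpow_eq hr1.le r2 z0 hQm hηm]
  exact rpow_neg_lintegral_inv_rpow_le_lintegral _ hp hηm.aemeasurable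
    (measurable_circlePowInt hQm _ z0).aemeasurable hη1

/-- With `I = ∫_{r₁}^{r₂} dr/‖Q‖_{1/(p-1)}(z₀,r) ∈ (0,∞)`, every
measurable `η : (r₁,r₂) → [0,∞]` with `∫_{r₁}^{r₂} η(r) dr = 1` satisfies
`∫_{R(z₀,r₁,r₂)} Q^{1/(p-1)}(z) η(|z-z₀|)^{p/(p-1)} dm(z) ≥ I^{-1/(p-1)}`. -/
theorem stmt7 (p : ℝ) (hp : 1 < p) (z0 : ℂ) (r1 r2 : ℝ) (hr1 : 0 < r1) (hr12 : r1 < r2)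
    (Q : ℂ → ℝ) (hQm : Measurable Q) (hQpos : ∀ z, 0 < Q z)
    (I : ℝ≥0∞) (hI : I = ∫⁻ r in Set.Ioo r1 r2, (normQ Q p z0 r)⁻¹ ∂volume)
    (hIpos : 0 < I) (hIfin : I ≠ ⊤)
    (η : ℝ → ℝ≥0∞) (hηm : Measurable η)
    (hη1 : ∫⁻ r in Set.Ioo r1 r2, η r ∂volume = 1) :
    I ^ (-1 / (p - 1)) ≤
      ∫⁻ z in annulus z0 r1 r2,
        ENNReal.ofReal (Q z) ^ (1 / (p - 1))
          * η (‖z - z0‖) ^ (p / (p - 1)) ∂volume :=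
  stmt7_general p hp z0 r1 r2 hr1 Q hQm I hI η hηm hη1
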